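/- Let A be a left brace such that A³ = ⟨0⟩, and let a ∈ A. Then for every integer n one has aⁿ + a⁻ⁿ = n²·(a ⋆ a), where aⁿ denotes the n-th multiplicative power of a. -/

import Mathlib

/-- A left brace: `(A, +)` is an abelian group, `(A, *)` is a group, and
`a * (b + c) = a * b + a * c - a` for all `a b c`. -/
class LeftBrace (A : Type*) extends AddCommGroup A, Group A where
  mul_add_eq : ∀ a b c : A, a * (b + c) = a * b + a * c - a

namespace LeftBrace

variable {A : Type*} [LeftBrace A]

/-- The star operation of a left brace: `a ⋆ b = a * b - a - b`. -/
def star (a b : A) : A := a * b - a - b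

/-- `K ⋆ L`: the subgroup of the additive group of `A` generated by all
`x ⋆ y` with `x ∈ K`, `y ∈ L`. -/
def setStar (K L : Set A) : AddSubgroup A :=
  AddSubgroup.closure (Set.image2 star K L)

/-- A subbrace of `A`: a subset that is simultaneously a subgroup of the
additive group of `A` and a subgroup of the multiplicative group of `A`. -/
def IsSubbrace (S : Set A) : Prop :=
  (0 : A) ∈ S ∧ (∀ x ∈ S, ∀ y ∈ S, x + y ∈ S) ∧ (∀ x ∈ S, -x ∈ S) ∧
    (1 : A) ∈ S ∧ (∀ x ∈ S, ∀ y ∈ S, x * y ∈ S) ∧ (∀ x ∈ S, x⁻¹ ∈ S)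

/-- A left ideal of `A`: a subbrace `S` with `a ⋆ b ∈ S` for all `a ∈ A`, `b ∈ S`. -/
def IsLeftIdeal (S : Set A) : Prop :=
  IsSubbrace S ∧ ∀ a : A, ∀ b ∈ S, star a b ∈ S

/-- An ideal of `A`: a subbrace `S` with `a ⋆ z ∈ S` and `z ⋆ a ∈ S`
for all `a ∈ A`, `z ∈ S`. -/
def IsIdeal (S : Set A) : Prop :=
  IsSubbrace S ∧ ∀ a : A, ∀ z ∈ S, star a z ∈ S ∧ star z a ∈ S

/-- The left series of the brace `A`, with the indexing shifted by one:
`leftSeriesN A 0 = A¹ = A` and `leftSeriesN A n = Aⁿ⁺¹ = A ⋆ Aⁿ`.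
In particular `leftSeriesN A 1 = A²` and `leftSeriesN A 2 = A³`. -/
def leftSeriesN (A : Type*) [LeftBrace A] : ℕ → AddSubgroup A
  | 0 => ⊤
  | n + 1 => setStar Set.univ ((leftSeriesN A n : AddSubgroup A) : Set A)

/-- The right series of the brace `A`, with the indexing shifted by one:
`rightSeriesN A 0 = A⁽¹⁾ = A` and `rightSeriesN A n = A⁽ⁿ⁺¹⁾ = A⁽ⁿ⁾ ⋆ A`.
In particular `rightSeriesN A 2 = A⁽³⁾` and `rightSeriesN A 3 = A⁽⁴⁾`. -/
def rightSeriesN (A : Type*) [LeftBrace A] : ℕ → AddSubgroup A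
  | 0 => ⊤
  | n + 1 => setStar ((rightSeriesN A n : AddSubgroup A) : Set A) Set.univ

end LeftBrace

open LeftBrace

/-!
Writing `a * b = a + b + a ⋆ b`, the hypothesis `A³ = 0` says that `b ↦ a ⋆ b` kills every
element of `A²`. Expanding `a ^ (n + 1) = a * a ^ n` then gives `a ⋆ a ^ n = n • (a ⋆ a)`, so the
successive differences `a ^ (n + 1) - a ^ n = a + n • (a ⋆ a)` are affine in `n`, and
`n ↦ a ^ n + a ^ (-n) - n² • (a ⋆ a)` is `1`-periodic, hence equal to its value `0` at `n = 0`.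
-/

namespace LeftBrace

variable {A : Type*} [LeftBrace A]

theorem mul_zero_eq_self (a : A) : a * 0 = a := by
  have h := mul_add_eq a 0 0
  rw [add_zero, eq_sub_iff_add_eq] at h
  exact (add_left_cancel h).symm

theorem zero_eq_one : (0 : A) = 1 := by
  simpa using mul_zero_eq_self (1 : A)

theorem mul_eq_add_add_star (a b : A) : a * b = a + b + star a b := by
  rw [star]; abel

theorem star_add (a b c : A) : star a (b + c) = star a b + star a c := by
  simp only [star, mul_add_eq]; abel

theorem star_zero (a : A) : star a 0 = 0 := by
  simp [star, mul_zero_eq_self]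

theorem star_mem_leftSeriesN_one (a b : A) : star a b ∈ leftSeriesN A 1 :=
  AddSubgroup.subset_closure (Set.mem_image2_of_mem (Set.mem_univ a) (Set.mem_univ b))

theorem star_star_eq_zero (h3 : leftSeriesN A 2 = ⊥) (a b c : A) :
    star a (star b c) = 0 := by
  have hmem : star a (star b c) ∈ leftSeriesN A 2 :=
    AddSubgroup.subset_closure
      (Set.mem_image2_of_mem (Set.mem_univ a) (star_mem_leftSeriesN_one b c))
  simpa [h3] using hmem

theorem zpow_add_one_eq (a : A) (n : ℤ) : a ^ (n + 1) = a + a ^ n + star a (a ^ n) := by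
  rw [add_comm, zpow_one_add, mul_eq_add_add_star]

theorem star_zpow (h3 : leftSeriesN A 2 = ⊥) (a : A) (n : ℤ) :
    star a (a ^ n) = n • star a a := by
  have hper : Function.Periodic (fun n : ℤ ↦ star a (a ^ n) - n • star a a) 1 := by
    intro n
    simp only [zpow_add_one_eq, star_add, star_star_eq_zero h3, add_zsmul, one_zsmul]
    abel
  simpa [sub_eq_zero, ← zero_eq_one, star_zero] using hper.int_mul_eq n

theorem zpow_add_one_sub_zpow (h3 : leftSeriesN A 2 = ⊥) (a : A) (n : ℤ) :
    a ^ (n + 1) - a ^ n = a + n • star a a := by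
  rw [zpow_add_one_eq, star_zpow h3]; abel

end LeftBrace

/-- If `A` is a left brace with `A³ = ⟨0⟩` (here
`A³ = A ⋆ (A ⋆ A) = leftSeriesN A 2`) and `a ∈ A`, then for every integer `n`
one has `aⁿ + a⁻ⁿ = n²·(a ⋆ a)`. -/
theorem zpow_add_zpow_neg {A : Type*} [LeftBrace A]
    (h3 : leftSeriesN A 2 = ⊥) (a : A) (n : ℤ) :
    a ^ n + a ^ (-n) = (n ^ 2) • star a a := by
  have hper : Function.Periodic (fun n : ℤ ↦ a ^ n + a ^ (-n) - n ^ 2 • star a a) 1 := by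
    intro n
    have hup := zpow_add_one_sub_zpow h3 a n
    have hdown := zpow_add_one_sub_zpow h3 a (-(n + 1))
    rw [show -(n + 1) + 1 = -n by ring] at hdown
    dsimp only
    rw [sub_eq_iff_eq_add] at hup hdown
    rw [hup, hdown]
    module
  simpa [sub_eq_zero, ← zero_eq_one] using hper.int_mul_eq n
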